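/- arXiv:1703.03203 — 3 statements merged into one kernel-verified Lean document; each statement's English description precedes it below -/
import Mathlib

section
/- Let N ∈ ℕ and let F₁ : [0, 1] → ℝ be a function that can be represented as F₁(x) = c₁(1-x)^{1/2} + c₂(1-x)^{3/2} + c₃(1-x)^{5/2} + c₄(1-x)^{7/2} + F̄₁(x), where c₁, c₂, c₃, c₄ ∈ ℝ and F̄₁ is four times continuously differentiable on [0, 1]. Then there exists a constant L̄₁ > 0 (depending on F₁ and N) such that for all n ≥ N, |(n+1)² R_{n+1} − n² Rₙ| ≤ L̄₁ / n^{1/2}. -/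
/-!
Write `E_n(F) = n² (T_n(F) - ∫₀¹ F)` for the scaled trapezoidal error, so that `n² R_n = -E_n`. It
is linear in `F`, so it suffices that `E_{n+1} - E_n = O(n^{-1/2})` for each of the five summands.

The corrected error `T - ∫ - h²/12 (f'(b) - f'(a))` on `[a, a + h]`, as a function of `h`, vanishes
to first order at `0` and has second derivative `O(h² sup |f'''|)`; integrating twice gives the
Euler–Maclaurin form of the trapezoidal rule with remainder `O(h⁴ sup |f'''|)`, hence
`E_n(F̄) = (F̄'(1) - F̄'(0))/12 + O(1/n)` for `F̄ ∈ C³`.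

For `(1 - x)^α` the Riemann sum is a power sum: `E_n = α/12 + n^{1-α} r_n` with
`r_n = ∑_{j<n} j^α - (n^{α+1}/(α+1) - n^α/2 + α n^{α-1}/12)`, and the corrected rule for `t^α`
on `[n, n+1]` gives `r_{n+1} - r_n = O(n^{α-3})`. So `r` is bounded when `α < 2` and is
`O(n^{α-3/2})` when `α ≥ 5/2`; either way `n^{1-α} r_n = O(n^{-1/2})` once `α ≥ 3/2`. For `α = 1/2`
only the increments of `√n r_n` are small, because `r` is bounded and `r_{n+1} - r_n = O(n^{-5/2})`.
-/

open MeasureTheory Set intervalIntegral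

theorem abs_le_mul_pow_succ_of_hasDerivWithinAt {φ φ' : ℝ → ℝ} {a b C : ℝ} {k : ℕ}
    (hC : 0 ≤ C) (hφ : ∀ x ∈ Icc a b, HasDerivWithinAt φ (φ' x) (Icc a b) x) (ha : φ a = 0)
    (hφ' : ∀ x ∈ Icc a b, |φ' x| ≤ C * (x - a) ^ k) :
    ∀ t ∈ Icc a b, |φ t| ≤ C * (t - a) ^ (k + 1) := by
  intro t ht
  have hsub : Icc a t ⊆ Icc a b := Icc_subset_Icc_right ht.2
  have hbound : ∀ x ∈ Ico a t, ‖φ' x‖ ≤ C * (t - a) ^ k := fun x hx => by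
    refine (hφ' x (hsub (Ico_subset_Icc_self hx))).trans ?_
    gcongr
    · linarith [hx.1]
    · exact hx.2.le
  simpa [ha, pow_succ, mul_assoc] using norm_image_sub_le_of_norm_deriv_le_segment'
    (fun x hx => (hφ x (hsub hx)).mono hsub) hbound t ⟨ht.1, le_rfl⟩

theorem hasDerivWithinAt_integral_Icc {f : ℝ → ℝ} {a b t : ℝ} (hf : ContinuousOn f (Icc a b))
    (ht : t ∈ Icc a b) :
    HasDerivWithinAt (fun u => ∫ x in a..u, f x) (f t) (Icc a b) t := by
  have := Fact.mk ht
  exact integral_hasDerivWithinAt_right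
    ((hf.mono (Icc_subset_Icc_right ht.2)).intervalIntegrable_of_Icc ht.1)
    (hf.stronglyMeasurableAtFilter_nhdsWithin measurableSet_Icc t) (hf t ht)

theorem abs_trapezoidal_error_one_sub_deriv_le {f f' f'' f''' : ℝ → ℝ} {a b M : ℝ} (hab : a ≤ b)
    (hf : ∀ x ∈ Icc a b, HasDerivWithinAt f (f' x) (Icc a b) x)
    (hf' : ∀ x ∈ Icc a b, HasDerivWithinAt f' (f'' x) (Icc a b) x)
    (hf'' : ∀ x ∈ Icc a b, HasDerivWithinAt f'' (f''' x) (Icc a b) x)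
    (hM : ∀ x ∈ Icc a b, |f''' x| ≤ M) :
    |trapezoidal_error f 1 a b - (b - a) ^ 2 / 12 * (f' b - f' a)| ≤ M / 4 * (b - a) ^ 4 := by
  have hM0 : 0 ≤ M := (abs_nonneg _).trans (hM a ⟨le_rfl, hab⟩)
  have hfc : ContinuousOn f (Icc a b) := fun x hx => (hf x hx).continuousWithinAt
  -- `g t` is the corrected error on `[a, t]`; `g' = g₁`, `g₁' = g₂`, and `g`, `g₁` vanish at `a`.
  set g : ℝ → ℝ := fun t =>
    (t - a) / 2 * (f a + f t) - (∫ x in a..t, f x) - (t - a) ^ 2 / 12 * (f' t - f' a)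
  set g₁ : ℝ → ℝ := fun t => (f a - f t) / 2 + (t - a) / 2 * f' t
    - (t - a) / 6 * (f' t - f' a) - (t - a) ^ 2 / 12 * f'' t
  set φ : ℝ → ℝ := fun t => (t - a) * f'' t - (f' t - f' a)
  set g₂ : ℝ → ℝ := fun t => φ t / 6 - (t - a) ^ 2 / 12 * f''' t
  have hφ : ∀ x ∈ Icc a b, HasDerivWithinAt φ ((x - a) * f''' x) (Icc a b) x := by
    intro x hx
    refine ((((hasDerivWithinAt_id x _).sub_const a).fun_mul (hf'' x hx)).fun_sub
      ((hf' x hx).sub_const (f' a))).congr_deriv ?_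
    simp only [id]; ring
  have hg₁ : ∀ x ∈ Icc a b, HasDerivWithinAt g₁ (g₂ x) (Icc a b) x := by
    intro x hx
    have hs := (hasDerivWithinAt_id x (Icc a b)).sub_const a
    refine (((((hf x hx).const_sub (f a)).div_const 2).fun_add
      ((hs.div_const 2).fun_mul (hf' x hx))).fun_sub
      ((hs.div_const 6).fun_mul ((hf' x hx).sub_const (f' a)))).fun_sub
      (((hs.fun_pow 2).div_const 12).fun_mul (hf'' x hx)) |>.congr_deriv ?_
    simp only [g₂, φ, id]; ring
  have hg : ∀ x ∈ Icc a b, HasDerivWithinAt g (g₁ x) (Icc a b) x := by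
    intro x hx
    have hs := (hasDerivWithinAt_id x (Icc a b)).sub_const a
    refine ((((hs.div_const 2).fun_mul ((hf x hx).const_add (f a))).fun_sub
      (hasDerivWithinAt_integral_Icc hfc hx)).fun_sub
      (((hs.fun_pow 2).div_const 12).fun_mul ((hf' x hx).sub_const (f' a)))).congr_deriv ?_
    simp only [g₁, id]; ring
  have bφ := abs_le_mul_pow_succ_of_hasDerivWithinAt (k := 1) hM0 hφ (by simp [φ]) fun x hx => by
    rw [abs_mul, abs_of_nonneg (sub_nonneg.2 hx.1), mul_comm, pow_one]
    exact mul_le_mul_of_nonneg_right (hM x hx) (sub_nonneg.2 hx.1)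
  have bg₂ : ∀ x ∈ Icc a b, |g₂ x| ≤ M / 4 * (x - a) ^ 2 := by
    intro x hx
    have h1 : |φ x| ≤ M * (x - a) ^ 2 := bφ x hx
    have h2 : |(x - a) ^ 2 / 12 * f''' x| ≤ (x - a) ^ 2 / 12 * M := by
      rw [abs_mul, abs_of_nonneg (by positivity)]
      exact mul_le_mul_of_nonneg_left (hM x hx) (by positivity)
    calc |g₂ x| ≤ |φ x| / 6 + |(x - a) ^ 2 / 12 * f''' x| := by
          simpa only [abs_div, abs_of_pos (by norm_num : (0:ℝ) < 6)] using
            abs_sub (φ x / 6) ((x - a) ^ 2 / 12 * f''' x)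
      _ ≤ M / 4 * (x - a) ^ 2 := by linarith
  have bg₁ := abs_le_mul_pow_succ_of_hasDerivWithinAt (by positivity) hg₁ (by simp [g₁]) bg₂
  have bg := abs_le_mul_pow_succ_of_hasDerivWithinAt (by positivity) hg (by simp [g]) bg₁
  simpa [trapezoidal_error, g] using bg b ⟨hab, le_rfl⟩

theorem abs_trapezoidal_error_sub_deriv_le {f f' f'' f''' : ℝ → ℝ} {a b M : ℝ} (hab : a ≤ b) {N : ℕ}
    (hN : 0 < N) (hf : ∀ x ∈ Icc a b, HasDerivWithinAt f (f' x) (Icc a b) x)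
    (hf' : ∀ x ∈ Icc a b, HasDerivWithinAt f' (f'' x) (Icc a b) x)
    (hf'' : ∀ x ∈ Icc a b, HasDerivWithinAt f'' (f''' x) (Icc a b) x)
    (hM : ∀ x ∈ Icc a b, |f''' x| ≤ M) :
    |trapezoidal_error f N a b - ((b - a) / N) ^ 2 / 12 * (f' b - f' a)|
      ≤ M / 4 * (b - a) * ((b - a) / N) ^ 3 := by
  set h := (b - a) / N
  have hh : 0 ≤ h := by positivity
  set x : ℕ → ℝ := fun i => a + i * h
  have hxN : x N = b := by simp only [x, h]; field_simp; ring
  have hsub : ∀ i < N, Icc (x i) (x (i + 1)) ⊆ Icc a b := fun i hi =>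
    Icc_subset_Icc (by simp only [x]; nlinarith) (by
      rw [← hxN]; simp only [x]; push_cast; gcongr; exact_mod_cast hi)
  have hterm : ∀ i < N, |trapezoidal_error f 1 (x i) (x (i + 1))
      - h ^ 2 / 12 * (f' (x (i + 1)) - f' (x i))| ≤ M / 4 * h ^ 4 := by
    intro i hi
    have hxx : x (i + 1) - x i = h := by simp only [x]; push_cast; ring
    rw [← hxx]
    exact abs_trapezoidal_error_one_sub_deriv_le (by linarith)
      (fun y hy => (hf y (hsub i hi hy)).mono (hsub i hi))
      (fun y hy => (hf' y (hsub i hi hy)).mono (hsub i hi))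
      (fun y hy => (hf'' y (hsub i hi hy)).mono (hsub i hi)) (fun y hy => hM y (hsub i hi hy))
  have hsum : trapezoidal_error f N a b
      = ∑ i ∈ Finset.range N, trapezoidal_error f 1 (x i) (x (i + 1)) := by
    have hfi : IntervalIntegrable f volume a (x N) := by
      rw [hxN]
      exact ContinuousOn.intervalIntegrable_of_Icc hab fun y hy => (hf y hy).continuousWithinAt
    rw [← hxN, ← sum_trapezoidal_error_adjacent_intervals hN hfi]
    simp only [x, Nat.cast_add, Nat.cast_one]
  have htel : f' b - f' a = ∑ i ∈ Finset.range N, (f' (x (i + 1)) - f' (x i)) := by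
    rw [Finset.sum_range_sub (fun i => f' (x i)), hxN]; simp [x]
  rw [hsum, htel, Finset.mul_sum, ← Finset.sum_sub_distrib]
  calc _ ≤ ∑ i ∈ Finset.range N, M / 4 * h ^ 4 :=
        (Finset.abs_sum_le_sum_abs _ _).trans
          (Finset.sum_le_sum fun i hi => hterm i (Finset.mem_range.1 hi))
    _ = M / 4 * (b - a) * h ^ 3 := by
        simp only [Finset.sum_const, Finset.card_range, nsmul_eq_mul, h]; field_simp

theorem exists_abs_sq_mul_trapezoidal_error_sub_le {f : ℝ → ℝ} {a b : ℝ} (hab : a < b)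
    (hf : ContDiffOn ℝ 3 f (Icc a b)) : ∃ C, ∀ N : ℕ, 0 < N →
      |(N : ℝ) ^ 2 * trapezoidal_error f N a b
        - (b - a) ^ 2 / 12 * (derivWithin f (Icc a b) b - derivWithin f (Icc a b) a)|
        ≤ C / (N : ℝ) := by
  have hu : UniqueDiffOn ℝ (Icc a b) := uniqueDiffOn_Icc hab
  have hf₁ := hf.derivWithin hu (m := 2) (by norm_num)
  have hf₂ := hf₁.derivWithin hu (m := 1) (by norm_num)
  have hf₃ := hf₂.derivWithin hu (m := 0) (by norm_num)
  obtain ⟨M, hM⟩ := isCompact_Icc.exists_bound_of_continuousOn hf₃.continuousOn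
  refine ⟨M / 4 * (b - a) ^ 4, fun N hN => ?_⟩
  have key := abs_trapezoidal_error_sub_deriv_le hab.le hN
    (fun x hx => ((hf.differentiableOn (by norm_num)) x hx).hasDerivWithinAt)
    (fun x hx => ((hf₁.differentiableOn (by norm_num)) x hx).hasDerivWithinAt)
    (fun x hx => ((hf₂.differentiableOn (by norm_num)) x hx).hasDerivWithinAt) hM
  calc _ = |(N : ℝ) ^ 2 * (trapezoidal_error f N a b - ((b - a) / N) ^ 2 / 12 *
        (derivWithin f (Icc a b) b - derivWithin f (Icc a b) a))| := by congr 1; field_simp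
    _ = (N : ℝ) ^ 2 * |trapezoidal_error f N a b - ((b - a) / N) ^ 2 / 12 *
        (derivWithin f (Icc a b) b - derivWithin f (Icc a b) a)| := by
          rw [abs_mul, abs_of_pos (by positivity)]
    _ ≤ (N : ℝ) ^ 2 * (M / 4 * (b - a) * ((b - a) / N) ^ 3) := by gcongr
    _ = M / 4 * (b - a) ^ 4 / N := by field_simp

theorem trapezoidal_error_add {f g : ℝ → ℝ} {N : ℕ} {a b : ℝ}
    (hf : IntervalIntegrable f volume a b) (hg : IntervalIntegrable g volume a b) :
    trapezoidal_error (fun x => f x + g x) N a b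
      = trapezoidal_error f N a b + trapezoidal_error g N a b := by
  simp only [trapezoidal_error, trapezoidal_integral, integral_add hf hg, Finset.sum_add_distrib]
  ring

theorem trapezoidal_error_const_mul (c : ℝ) (f : ℝ → ℝ) (N : ℕ) (a b : ℝ) :
    trapezoidal_error (fun x => c * f x) N a b = c * trapezoidal_error f N a b := by
  simp only [trapezoidal_error, trapezoidal_integral, intervalIntegral.integral_const_mul,
    ← Finset.mul_sum]
  ring

theorem trapezoidal_error_congr {f g : ℝ → ℝ} {a b : ℝ} (hab : a ≤ b) (h : EqOn f g (Icc a b))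
    (N : ℕ) : trapezoidal_error f N a b = trapezoidal_error g N a b := by
  have hnode : ∀ k ∈ Finset.range (N - 1), a + (k + 1) * (b - a) / N ∈ Icc a b := by
    intro k hk
    have hk : (k : ℝ) + 1 ≤ N := by
      have := Finset.mem_range.1 hk; exact_mod_cast (by omega : k + 1 ≤ N)
    have hN : (0 : ℝ) < N := by linarith [k.cast_nonneg (α := ℝ)]
    constructor
    · have : 0 ≤ (k + 1) * (b - a) / N := by have := sub_nonneg.2 hab; positivity
      linarith
    · rw [add_comm, ← le_sub_iff_add_le, div_le_iff₀ hN]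
      nlinarith
  simp only [trapezoidal_error, trapezoidal_integral, h ⟨le_rfl, hab⟩, h ⟨hab, le_rfl⟩,
    Finset.sum_congr rfl fun k hk => h (hnode k hk),
    integral_congr (h.mono (uIcc_of_le hab).subset)]

theorem trapezoidal_integral_zero_one (f : ℝ → ℝ) (n : ℕ) :
    trapezoidal_integral f n 0 1 = 1 / (2 * n) * f 0 + 1 / (2 * n) * f 1
      + ∑ k ∈ Finset.Icc 1 (n - 1), 1 / n * f (k / n) := by
  rcases n.eq_zero_or_pos with rfl | hn
  · simp [trapezoidal_integral]
  rw [trapezoidal_integral, ← Finset.Ico_add_one_right_eq_Icc,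
    Nat.sub_one_add_one_eq_of_pos hn, Finset.sum_Ico_eq_sum_range, ← Finset.mul_sum]
  simp only [Nat.cast_add, Nat.cast_one, zero_add, sub_zero, mul_one, add_comm (1 : ℝ)]
  ring

theorem rpow_le_one_add_two_rpow_mul {x y p : ℝ} (hx : 0 < x) (hxy : x ≤ y) (hy : y ≤ 2 * x) :
    y ^ p ≤ (1 + 2 ^ p) * x ^ p := by
  have h2 : (0 : ℝ) ≤ 2 ^ p * x ^ p := by positivity
  rcases le_total p 0 with hp | hp
  · nlinarith [Real.rpow_le_rpow_of_nonpos hx hxy hp]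
  · nlinarith [Real.rpow_le_rpow (hx.le.trans hxy) hy hp, Real.mul_rpow zero_le_two hx.le (z := p),
      Real.rpow_nonneg hx.le p]

/-- The first three terms of the Euler–Maclaurin expansion of `∑_{j < x} j ^ α`. -/
noncomputable def powSumApprox (α x : ℝ) : ℝ :=
  x ^ (α + 1) / (α + 1) - x ^ α / 2 + α / 12 * x ^ (α - 1)

noncomputable def powSumRemainder (α : ℝ) (n : ℕ) : ℝ :=
  ∑ j ∈ Finset.range n, (j : ℝ) ^ α - powSumApprox α n

theorem exists_abs_powSumRemainder_succ_sub_le {α : ℝ} (hα : α ≠ -1) :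
    ∃ K, ∀ n : ℕ, 0 < n → |powSumRemainder α (n + 1) - powSumRemainder α n| ≤ K * n ^ (α - 3) := by
  set c := |α * (α - 1) * (α - 1 - 1)| * (1 + 2 ^ (α - 3))
  refine ⟨c / 4, fun n hn => ?_⟩
  set x : ℝ := (n : ℝ)
  have hx : 1 ≤ x := by simp only [x]; exact_mod_cast hn
  have hpos : ∀ t ∈ Icc x (x + 1), 0 < t := fun t ht => by linarith [ht.1]
  have hd : ∀ d p t, t ∈ Icc x (x + 1) →
      HasDerivWithinAt (fun t => d * t ^ p) (d * p * t ^ (p - 1)) (Icc x (x + 1)) t :=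
    fun d p t ht => by
      simpa [mul_assoc] using
        ((Real.hasDerivAt_rpow_const (Or.inl (hpos t ht).ne')).const_mul d).hasDerivWithinAt
  have key := abs_trapezoidal_error_one_sub_deriv_le (by linarith)
    (fun t ht => by simpa using hd 1 α t ht) (hd α (α - 1)) (hd (α * (α - 1)) (α - 1 - 1))
    (M := c * x ^ (α - 3)) fun t ht => by
      rw [abs_mul, abs_of_pos (Real.rpow_pos_of_pos (hpos t ht) _),
        show α - 1 - 1 - 1 = α - 3 by ring]
      exact (mul_le_mul_of_nonneg_left (rpow_le_one_add_two_rpow_mul (by linarith) ht.1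
        (by linarith [ht.2])) (abs_nonneg _)).trans_eq (by simp only [c]; ring)
  have hint : ∫ t in x..x + 1, t ^ α = ((x + 1) ^ (α + 1) - x ^ (α + 1)) / (α + 1) :=
    integral_rpow (Or.inr ⟨hα, fun h0 => by
      rw [uIcc_of_le (by linarith)] at h0; linarith [h0.1]⟩)
  have hstep : powSumRemainder α (n + 1) - powSumRemainder α n
      = trapezoidal_error (· ^ α) 1 x (x + 1)
        - (x + 1 - x) ^ 2 / 12 * (α * (x + 1) ^ (α - 1) - α * x ^ (α - 1)) := by
    simp only [powSumRemainder, powSumApprox, Finset.sum_range_succ, trapezoidal_error,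
      trapezoidal_integral_one, hint, Nat.cast_add, Nat.cast_one, x]
    ring
  rw [hstep]
  exact (by simpa using key : _ ≤ c * x ^ (α - 3) / 4).trans_eq (by ring)

theorem trapezoidal_integral_one_sub_rpow {α : ℝ} (hα : 0 < α) {n : ℕ} (hn : 0 < n) :
    trapezoidal_integral (fun x => (1 - x) ^ α) n 0 1
      = (1 / 2 + (∑ j ∈ Finset.range n, (j : ℝ) ^ α) / (n : ℝ) ^ α) / n := by
  have hn' : (0 : ℝ) < n := by exact_mod_cast hn
  have hterm : ∀ k ∈ Finset.range (n - 1),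
      (1 - (0 + (k + 1) * (1 - 0) / n : ℝ)) ^ α = (((n - 1 - k : ℕ) : ℝ)) ^ α / (n : ℝ) ^ α := by
    intro k hk
    rw [Finset.mem_range] at hk
    rw [← Real.div_rpow (Nat.cast_nonneg _) hn'.le, Nat.cast_sub (by omega), Nat.cast_sub hn]
    congr 1
    field_simp
    ring
  have hreflect : ∑ k ∈ Finset.range (n - 1), ((n - 1 - k : ℕ) : ℝ) ^ α
      = ∑ j ∈ Finset.range n, (j : ℝ) ^ α := by
    rw [← Finset.sum_range_reflect]
    conv_rhs => rw [← Nat.sub_one_add_one_eq_of_pos hn, Finset.sum_range_succ']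
    simp only [Nat.cast_zero, Real.zero_rpow hα.ne', add_zero]
    refine Finset.sum_congr rfl fun k hk => ?_
    rw [Finset.mem_range] at hk
    congr 2
    omega
  rw [trapezoidal_integral, Finset.sum_congr rfl hterm, ← Finset.sum_div, hreflect]
  simp only [sub_zero, one_div, Real.one_rpow, sub_self, Real.zero_rpow hα.ne', add_zero]
  ring

theorem integral_one_sub_rpow {α : ℝ} (hα : 0 < α) :
    ∫ x in (0 : ℝ)..1, (1 - x) ^ α = 1 / (α + 1) := by
  rw [intervalIntegral.integral_comp_sub_left (fun x => x ^ α),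
    integral_rpow (Or.inl (by linarith))]
  simp [Real.zero_rpow (by linarith : α + 1 ≠ 0)]

theorem sq_mul_trapezoidal_error_one_sub_rpow {α : ℝ} (hα : 0 < α) {n : ℕ} (hn : 0 < n) :
    (n : ℝ) ^ 2 * trapezoidal_error (fun x => (1 - x) ^ α) n 0 1
      = α / 12 + (n : ℝ) ^ (1 - α) * powSumRemainder α n := by
  have hn' : (0 : ℝ) < n := by exact_mod_cast hn
  have h₁ : (n : ℝ) ^ (α + 1) = (n : ℝ) ^ α * n := by rw [Real.rpow_add_one hn'.ne']
  have h₂ : (n : ℝ) ^ (α - 1) = (n : ℝ) ^ α / n := by rw [Real.rpow_sub_one hn'.ne']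
  have h₃ : (n : ℝ) ^ (1 - α) = n / (n : ℝ) ^ α := by rw [Real.rpow_sub hn', Real.rpow_one]
  rw [trapezoidal_error, trapezoidal_integral_one_sub_rpow hα hn, integral_one_sub_rpow hα,
    powSumRemainder, powSumApprox, h₁, h₂, h₃]
  field_simp
  ring

theorem abs_sub_le_sum_Ico_of_abs_succ_sub_le {a b : ℕ → ℝ}
    (h : ∀ n, 0 < n → |a (n + 1) - a n| ≤ b n) {m n : ℕ} (hm : 0 < m) (hmn : m ≤ n) :
    |a n - a m| ≤ ∑ i ∈ Finset.Ico m n, b i := by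
  rw [← Real.dist_eq, dist_comm]
  refine (dist_le_Ico_sum_dist a hmn).trans (Finset.sum_le_sum fun i hi => ?_)
  rw [dist_comm, Real.dist_eq]
  exact h i (hm.trans_le (Finset.mem_Ico.1 hi).1)

theorem exists_abs_le_of_abs_succ_sub_le_rpow {a : ℕ → ℝ} {K β : ℝ} (hβ : β < -1)
    (h : ∀ n, 0 < n → |a (n + 1) - a n| ≤ K * (n : ℝ) ^ β) : ∃ C, ∀ n, 0 < n → |a n| ≤ C := by
  have hK : 0 ≤ K := by simpa using (abs_nonneg _).trans (h 1 one_pos)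
  refine ⟨|a 1| + K * ∑' j : ℕ, (j : ℝ) ^ β, fun n hn => ?_⟩
  have hsum : ∑ i ∈ Finset.Ico 1 n, (i : ℝ) ^ β ≤ ∑' j : ℕ, (j : ℝ) ^ β :=
    (Real.summable_nat_rpow.2 hβ).sum_le_tsum _ fun j _ => by positivity
  have := abs_sub_le_sum_Ico_of_abs_succ_sub_le h one_pos hn
  rw [← Finset.mul_sum] at this
  have := abs_sub_abs_le_abs_sub (a n) (a 1)
  nlinarith

theorem abs_le_of_abs_succ_sub_le_rpow {a : ℕ → ℝ} {K γ : ℝ} (hγ : 0 ≤ γ)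
    (h : ∀ n, 0 < n → |a (n + 1) - a n| ≤ K * (n : ℝ) ^ γ) {n : ℕ} (hn : 0 < n) :
    |a n| ≤ (|a 1| + K) * (n : ℝ) ^ (γ + 1) := by
  have hK : 0 ≤ K := by simpa using (abs_nonneg _).trans (h 1 one_pos)
  have hn' : (1 : ℝ) ≤ n := by exact_mod_cast hn
  have hsum : ∑ i ∈ Finset.Ico 1 n, K * (i : ℝ) ^ γ ≤ K * (n : ℝ) ^ (γ + 1) := calc
    _ ≤ ∑ i ∈ Finset.Ico 1 n, K * (n : ℝ) ^ γ := Finset.sum_le_sum fun i hi => by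
        gcongr; exact_mod_cast (Finset.mem_Ico.1 hi).2.le
    _ ≤ K * (n : ℝ) ^ (γ + 1) := by
        rw [Finset.sum_const, Nat.card_Ico, nsmul_eq_mul, Real.rpow_add_one (by positivity)]
        have : ((n - 1 : ℕ) : ℝ) ≤ n := by exact_mod_cast Nat.sub_le n 1
        have : 0 ≤ K * (n : ℝ) ^ γ := by positivity
        nlinarith
  have h1 : |a 1| ≤ |a 1| * (n : ℝ) ^ (γ + 1) :=
    le_mul_of_one_le_right (abs_nonneg _) (Real.one_le_rpow hn' (by linarith))
  have := abs_sub_le_sum_Ico_of_abs_succ_sub_le h one_pos hn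
  have := abs_sub_abs_le_abs_sub (a n) (a 1)
  linarith

def HasInvSqrtIncrements (e : ℕ → ℝ) : Prop :=
  ∃ L, ∀ n : ℕ, 0 < n → |e (n + 1) - e n| ≤ L / √n

namespace HasInvSqrtIncrements

variable {e f : ℕ → ℝ}

theorem add (he : HasInvSqrtIncrements e) (hf : HasInvSqrtIncrements f) :
    HasInvSqrtIncrements fun n => e n + f n := by
  obtain ⟨L, hL⟩ := he
  obtain ⟨L', hL'⟩ := hf
  refine ⟨L + L', fun n hn => ?_⟩
  rw [add_div, add_sub_add_comm]
  exact (abs_add_le _ _).trans (add_le_add (hL n hn) (hL' n hn))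

theorem const_mul (he : HasInvSqrtIncrements e) (c : ℝ) :
    HasInvSqrtIncrements fun n => c * e n := by
  obtain ⟨L, hL⟩ := he
  refine ⟨|c| * L, fun n hn => ?_⟩
  rw [← mul_sub, abs_mul, mul_div_assoc]
  exact mul_le_mul_of_nonneg_left (hL n hn) (abs_nonneg c)

theorem const_add (he : HasInvSqrtIncrements e) (c : ℝ) :
    HasInvSqrtIncrements fun n => c + e n := by
  obtain ⟨L, hL⟩ := he
  exact ⟨L, fun n hn => by simpa only [add_sub_add_left_eq_sub] using hL n hn⟩

theorem congr (he : HasInvSqrtIncrements e) (h : ∀ n, 0 < n → e n = f n) :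
    HasInvSqrtIncrements f := by
  obtain ⟨L, hL⟩ := he
  exact ⟨L, fun n hn => by rw [← h n hn, ← h (n + 1) n.succ_pos]; exact hL n hn⟩

theorem of_abs_sub_le {B C : ℝ} (h : ∀ n, 0 < n → |e n - B| ≤ C / √n) :
    HasInvSqrtIncrements e := by
  refine ⟨2 * |C|, fun n hn => ?_⟩
  have hsqrt : ∀ m : ℕ, n ≤ m → C / √m ≤ |C| / √n := fun m hm =>
    (div_le_div_of_nonneg_right (le_abs_self C) (Real.sqrt_nonneg _)).trans
      (div_le_div_of_nonneg_left (abs_nonneg C) (Real.sqrt_pos.2 (Nat.cast_pos.2 hn))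
        (Real.sqrt_le_sqrt (by exact_mod_cast hm)))
  calc |e (n + 1) - e n| ≤ |e (n + 1) - B| + |e n - B| := by
        simpa only [abs_sub_comm B] using abs_sub_le (e (n + 1)) B (e n)
    _ ≤ 2 * |C| / √n := by
        rw [mul_div_assoc]
        linarith [(h (n + 1) n.succ_pos).trans (hsqrt _ n.le_succ), (h n hn).trans (hsqrt n le_rfl)]

theorem sqrt_mul {a : ℕ → ℝ} {C K : ℝ} (ha : ∀ n, 0 < n → |a n| ≤ C)
    (had : ∀ n, 0 < n → |a (n + 1) - a n| ≤ K / n) :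
    HasInvSqrtIncrements fun n => √n * a n := by
  have hC : 0 ≤ C := (abs_nonneg _).trans (ha 1 one_pos)
  have hK : 0 ≤ K := by simpa using (abs_nonneg _).trans (had 1 one_pos)
  refine ⟨2 * K + C, fun n hn => ?_⟩
  have hn' : (0 : ℝ) < n := Nat.cast_pos.2 hn
  set s := √(n : ℝ)
  set t := √((n + 1 : ℕ) : ℝ)
  have hs : 0 < s := Real.sqrt_pos.2 hn'
  have hs2 : s ^ 2 = n := Real.sq_sqrt hn'.le
  have ht2 : t ^ 2 = n + 1 := by rw [Real.sq_sqrt (Nat.cast_nonneg _)]; push_cast; ring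
  have hst : s ≤ t := Real.sqrt_le_sqrt (by exact_mod_cast n.le_succ)
  have ht : t ≤ 2 * s := by
    have hn1 : (1 : ℝ) ≤ n := Nat.one_le_cast.2 hn
    nlinarith
  have hts : (t - s) * s ≤ 1 := by nlinarith [sq_nonneg (t - s)]
  calc |t * a (n + 1) - s * a n| = |t * (a (n + 1) - a n) + (t - s) * a n| := by ring_nf
    _ ≤ t * |a (n + 1) - a n| + (t - s) * |a n| := by
        refine (abs_add_le _ _).trans_eq ?_
        rw [abs_mul, abs_mul, abs_of_nonneg (hs.le.trans hst), abs_of_nonneg (sub_nonneg.2 hst)]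
    _ ≤ t * (K / n) + (t - s) * C := by
        gcongr
        · exact had n hn
        · exact ha n hn
    _ = t / s * (K / s) + (t - s) * s * (C / s) := by rw [← hs2]; field_simp
    _ ≤ 2 * (K / s) + 1 * (C / s) := by
        gcongr
        rwa [div_le_iff₀ hs]
    _ = (2 * K + C) / s := by ring

theorem exists_pos (he : HasInvSqrtIncrements e) :
    ∃ L > 0, ∀ n : ℕ, 0 < n → |e (n + 1) - e n| ≤ L / √n := by
  obtain ⟨L, hL⟩ := he
  refine ⟨max L 1, by positivity, fun n hn => (hL n hn).trans ?_⟩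
  exact div_le_div_of_nonneg_right (le_max_left L 1) (Real.sqrt_nonneg _)

end HasInvSqrtIncrements

theorem abs_rpow_one_sub_mul_le {x α r C : ℝ} (hx : 0 < x) (hr : |r| ≤ C * x ^ (α - 3 / 2)) :
    |x ^ (1 - α) * r| ≤ C / √x := by
  have hxα : 0 < x ^ (1 - α) := Real.rpow_pos_of_pos hx _
  calc |x ^ (1 - α) * r| ≤ x ^ (1 - α) * (C * x ^ (α - 3 / 2)) := by
        rw [abs_mul, abs_of_pos hxα]; gcongr
    _ = C / √x := by
        rw [mul_left_comm, ← Real.rpow_add hx, show 1 - α + (α - 3 / 2) = -(1 / 2) by ring,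
          Real.rpow_neg hx.le, Real.sqrt_eq_rpow, ← div_eq_mul_inv]

theorem hasInvSqrtIncrements_one_sub_rpow {α : ℝ}
    (hα : α = 1 / 2 ∨ 3 / 2 ≤ α ∧ α < 2 ∨ 5 / 2 ≤ α) :
    HasInvSqrtIncrements fun n => (n : ℝ) ^ 2 * trapezoidal_error (fun x => (1 - x) ^ α) n 0 1 := by
  have hα0 : 0 < α := by rcases hα with rfl | ⟨h, -⟩ | h <;> linarith
  obtain ⟨K, hK⟩ := exists_abs_powSumRemainder_succ_sub_le (by linarith : α ≠ -1)
  refine (HasInvSqrtIncrements.const_add ?_ (α / 12)).congr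
    fun n hn => (sq_mul_trapezoidal_error_one_sub_rpow hα0 hn).symm
  rcases hα with rfl | ⟨h₁, h₂⟩ | h
  · obtain ⟨C, hC⟩ := exists_abs_le_of_abs_succ_sub_le_rpow (by norm_num) hK
    refine (HasInvSqrtIncrements.sqrt_mul hC (K := K) fun n hn => (hK n hn).trans ?_).congr
      fun n _ => by rw [Real.sqrt_eq_rpow]; norm_num
    have hK0 : 0 ≤ K := by simpa using (abs_nonneg _).trans (hK 1 one_pos)
    calc K * (n : ℝ) ^ (1 / 2 - 3 : ℝ) ≤ K * (n : ℝ) ^ (-1 : ℝ) := by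
          gcongr
          · exact Nat.one_le_cast.2 hn
          · norm_num
      _ = K / n := by rw [Real.rpow_neg_one, div_eq_mul_inv]
  · obtain ⟨C, hC⟩ := exists_abs_le_of_abs_succ_sub_le_rpow (by linarith) hK
    refine HasInvSqrtIncrements.of_abs_sub_le (B := 0) (C := C) fun n hn => ?_
    rw [sub_zero]
    refine abs_rpow_one_sub_mul_le (Nat.cast_pos.2 hn) ((hC n hn).trans ?_)
    exact le_mul_of_one_le_right ((abs_nonneg _).trans (hC 1 one_pos))
      (Real.one_le_rpow (Nat.one_le_cast.2 hn) (by linarith))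
  · have hK' : ∀ n, 0 < n → |powSumRemainder α (n + 1) - powSumRemainder α n|
        ≤ K * (n : ℝ) ^ (α - 5 / 2) := fun n hn => (hK n hn).trans <| by
      have hK0 : 0 ≤ K := by simpa using (abs_nonneg _).trans (hK 1 one_pos)
      gcongr
      · exact Nat.one_le_cast.2 hn
      · linarith
    refine HasInvSqrtIncrements.of_abs_sub_le (B := 0)
      (C := |powSumRemainder α 1| + K) fun n hn => ?_
    rw [sub_zero]
    refine abs_rpow_one_sub_mul_le (Nat.cast_pos.2 hn) ?_
    have := abs_le_of_abs_succ_sub_le_rpow (by linarith) hK' hn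
    rwa [show α - 5 / 2 + 1 = α - 3 / 2 by ring] at this

theorem hasInvSqrtIncrements_of_contDiffOn {f : ℝ → ℝ} (hf : ContDiffOn ℝ 3 f (Icc 0 1)) :
    HasInvSqrtIncrements fun n => (n : ℝ) ^ 2 * trapezoidal_error f n 0 1 := by
  obtain ⟨C, hC⟩ := exists_abs_sq_mul_trapezoidal_error_sub_le zero_lt_one hf
  refine HasInvSqrtIncrements.of_abs_sub_le (C := |C|) fun n hn => (hC n hn).trans ?_
  have hn' : (1 : ℝ) ≤ n := Nat.one_le_cast.2 hn
  calc C / n ≤ |C| / n := by gcongr; exact le_abs_self C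
    _ ≤ |C| / √n := by
        gcongr
        exact Real.sqrt_le_iff.2 ⟨by linarith, by nlinarith⟩

theorem hasInvSqrtIncrements_of_eqOn_one_sub_rpow_add {F Fb : ℝ → ℝ} {c₁ c₂ c₃ c₄ : ℝ}
    (hFb : ContDiffOn ℝ 3 Fb (Icc 0 1))
    (hF : EqOn F (fun x => c₁ * (1 - x) ^ ((1 : ℝ) / 2) + c₂ * (1 - x) ^ ((3 : ℝ) / 2)
      + c₃ * (1 - x) ^ ((5 : ℝ) / 2) + c₄ * (1 - x) ^ ((7 : ℝ) / 2) + Fb x) (Icc 0 1)) :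
    HasInvSqrtIncrements fun n => (n : ℝ) ^ 2 * trapezoidal_error F n 0 1 := by
  refine (((((hasInvSqrtIncrements_one_sub_rpow (α := 1 / 2) (by norm_num)).const_mul c₁).add
    ((hasInvSqrtIncrements_one_sub_rpow (α := 3 / 2) (by norm_num)).const_mul c₂)).add
    ((hasInvSqrtIncrements_one_sub_rpow (α := 5 / 2) (by norm_num)).const_mul c₃)).add
    ((hasInvSqrtIncrements_one_sub_rpow (α := 7 / 2) (by norm_num)).const_mul c₄)).add
    (hasInvSqrtIncrements_of_contDiffOn hFb) |>.congr fun n _ => ?_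
  rw [trapezoidal_error_congr zero_le_one hF,
    trapezoidal_error_add _ (hFb.continuousOn.intervalIntegrable_of_Icc zero_le_one),
    trapezoidal_error_add, trapezoidal_error_add, trapezoidal_error_add,
    trapezoidal_error_const_mul, trapezoidal_error_const_mul, trapezoidal_error_const_mul,
    trapezoidal_error_const_mul]
  · ring
  all_goals exact Continuous.intervalIntegrable (by fun_prop (disch := norm_num)) 0 1

/-- Proposition 1, item 2, for z₀ = 0: if
F₁(x) = c₁(1-x)^{1/2} + c₂(1-x)^{3/2} + c₃(1-x)^{5/2} + c₄(1-x)^{7/2} + Fb(x)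
on [0,1] with Fb ∈ C⁴[0,1], then the Riemann sum errors Rₙ satisfy
|(n+1)² R_{n+1} − n² Rₙ| ≤ L̄₁ / n^{1/2} for all n ≥ N. -/
theorem riemann_error_sqrt_second_difference_zero
    (N : ℕ) (hN : 0 < N) (F₁ Fb : ℝ → ℝ) (c₁ c₂ c₃ c₄ : ℝ)
    (hFb : ContDiffOn ℝ 4 Fb (Set.Icc (0 : ℝ) 1))
    (hrep : ∀ x ∈ Set.Icc (0 : ℝ) 1,
      F₁ x = c₁ * (1 - x) ^ ((1 : ℝ)/2) + c₂ * (1 - x) ^ ((3 : ℝ)/2)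
        + c₃ * (1 - x) ^ ((5 : ℝ)/2) + c₄ * (1 - x) ^ ((7 : ℝ)/2) + Fb x) :
    ∃ L₁ > (0 : ℝ), ∀ n : ℕ, N ≤ n →
      |((n : ℝ) + 1)^2 *
          ((∫ x in (0 : ℝ)..1, F₁ x) -
            ((1/(2*((n : ℝ) + 1))) * F₁ 0 + (1/(2*((n : ℝ) + 1))) * F₁ 1 +
              ∑ k ∈ Finset.Icc 1 ((n + 1) - 1),
                (1/((n : ℝ) + 1)) * F₁ ((k : ℝ)/((n : ℝ) + 1))))
        - (n : ℝ)^2 *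
          ((∫ x in (0 : ℝ)..1, F₁ x) -
            ((1/(2*(n : ℝ))) * F₁ 0 + (1/(2*(n : ℝ))) * F₁ 1 +
              ∑ k ∈ Finset.Icc 1 (n - 1),
                (1/(n : ℝ)) * F₁ ((k : ℝ)/(n : ℝ))))|
        ≤ L₁ / (n : ℝ) ^ ((1 : ℝ)/2) := by
  obtain ⟨L, hL, hbound⟩ :=
    (hasInvSqrtIncrements_of_eqOn_one_sub_rpow_add (hFb.of_le (by norm_num)) hrep).exists_pos
  refine ⟨L, hL, fun n hn => ?_⟩
  have h := hbound n (hN.trans_le hn)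
  rw [Real.sqrt_eq_rpow] at h
  rw [← abs_neg]
  convert h using 2
  simp only [trapezoidal_error, trapezoidal_integral_zero_one]
  push_cast
  ring
end

section
/- Let N ∈ ℕ and let F₂ : [-1, 1) → ℝ be a function that can be represented as F₂(x) = c₁(1-x)^{-1/2} + c₂(1-x)^{1/2} + F̃₂(x), where c₁ > 0, c₂ ∈ ℝ, and F̃₂ is continuously differentiable on [-1, 1]. Then there exist constants L₂* > c₁ and l₂ (depending on F₂ and N) such that for all n ≥ N, ∫_{-1}^{1} F₂(x) dx − Σ_{k = -n}^{n-1} (1/n) F₂(k/n) ≥ L₂*/n^{1/2} − l₂/n. -/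
/-!
The left Riemann error is linear in the integrand, so it splits along
`F₂ = c₁ (1-x)^{-1/2} + c₂ √(1-x) + F̃₂`. For the singular part the Riemann sum is
`n^{-1/2} ∑_{j=1}^{2n} j^{-1/2} ≤ n^{-1/2} (2√(2n) - 11/10)`, against the integral `2√2`, so its
error is at least `(11/10)/√n`. The other two parts cost only `O(1/n)`: on a cell of width
`h = 1/n` the integral is at least `h` times the left value minus a defect, and the defects
telescope to `|c₂| √2` for the monotone `c₂ √(1-x)` and are `K/n` each for the `K`-Lipschitz `F̃₂`.
Hence `L₂* = 11 c₁ / 10` works.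
-/

open MeasureTheory Set intervalIntegral

noncomputable def leftRiemannSum (f : ℝ → ℝ) (a h : ℝ) (m : ℕ) : ℝ :=
  ∑ i ∈ Finset.range m, h * f (a + i * h)

noncomputable def leftRiemannError (f : ℝ → ℝ) (a h : ℝ) (m : ℕ) : ℝ :=
  (∫ x in a..a + m * h, f x) - leftRiemannSum f a h m

section LeftRiemannError

variable {f g : ℝ → ℝ} {a h : ℝ} {m : ℕ}

lemma Icc_add_nat_mul_subset_Icc (hh : 0 ≤ h) {i : ℕ} (hi : i < m) :
    Icc (a + i * h) (a + (i + 1) * h) ⊆ Icc a (a + m * h) := by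
  have hi : (i : ℝ) + 1 ≤ m := by exact_mod_cast hi
  exact Icc_subset_Icc (by nlinarith [i.cast_nonneg (α := ℝ)]) (by nlinarith)

lemma add_nat_mul_mem_Icc (hh : 0 ≤ h) {i : ℕ} (hi : i < m) : a + i * h ∈ Icc a (a + m * h) :=
  Icc_add_nat_mul_subset_Icc hh hi ⟨le_rfl, by nlinarith⟩

lemma leftRiemannError_congr_of_eqOn (hh : 0 < h) (hfg : EqOn f g (Ico a (a + m * h))) :
    leftRiemannError f a h m = leftRiemannError g a h m := by
  have hab : a ≤ a + m * h := le_add_of_nonneg_right (by positivity)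
  have hint : ∫ x in a..a + m * h, f x = ∫ x in a..a + m * h, g x := by
    rw [integral_of_le hab, integral_of_le hab, integral_Ioc_eq_integral_Ioo,
      integral_Ioc_eq_integral_Ioo]
    exact setIntegral_congr_fun measurableSet_Ioo (hfg.mono Ioo_subset_Ico_self)
  have hsum : leftRiemannSum f a h m = leftRiemannSum g a h m := by
    refine Finset.sum_congr rfl fun i hi => ?_
    have hi : (i : ℝ) + 1 ≤ m := by exact_mod_cast Finset.mem_range.1 hi
    rw [hfg ⟨by nlinarith [i.cast_nonneg (α := ℝ)], by nlinarith⟩]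
  rw [leftRiemannError, leftRiemannError, hint, hsum]

lemma leftRiemannError_add (hf : IntervalIntegrable f volume a (a + m * h))
    (hg : IntervalIntegrable g volume a (a + m * h)) :
    leftRiemannError (fun x => f x + g x) a h m
      = leftRiemannError f a h m + leftRiemannError g a h m := by
  simp only [leftRiemannError, leftRiemannSum, integral_add hf hg, mul_add,
    Finset.sum_add_distrib]
  ring

lemma leftRiemannError_const_mul (c : ℝ) :
    leftRiemannError (fun x => c * f x) a h m = c * leftRiemannError f a h m := by
  simp only [leftRiemannError, leftRiemannSum, intervalIntegral.integral_const_mul, mul_sub,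
    Finset.mul_sum, mul_left_comm]

lemma neg_mul_sum_le_leftRiemannError (hh : 0 ≤ h)
    (hf : IntervalIntegrable f volume a (a + m * h)) (δ : ℕ → ℝ)
    (hδ : ∀ i < m, ∀ x ∈ Icc (a + i * h) (a + (i + 1) * h), f (a + i * h) - δ i ≤ f x) :
    -(h * ∑ i ∈ Finset.range m, δ i) ≤ leftRiemannError f a h m := by
  have hcell : ∀ i < m, IntervalIntegrable f volume (a + i * h) (a + (i + 1 : ℕ) * h) := by
    intro i hi
    refine hf.mono_set ?_
    rw [uIcc_of_le (by push_cast; nlinarith),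
      uIcc_of_le (le_add_of_nonneg_right (by positivity))]
    exact_mod_cast Icc_add_nat_mul_subset_Icc hh hi
  have hsplit : ∫ x in a..a + m * h, f x
      = ∑ i ∈ Finset.range m, ∫ x in a + i * h..a + (i + 1 : ℕ) * h, f x := by
    simpa using (sum_integral_adjacent_intervals hcell).symm
  have hcell_ge : ∀ i < m,
      h * (f (a + i * h) - δ i) ≤ ∫ x in a + i * h..a + (i + 1 : ℕ) * h, f x := by
    intro i hi
    have hle : a + i * h ≤ a + (i + 1 : ℕ) * h := by push_cast; nlinarith
    have := integral_mono_on hle intervalIntegrable_const (hcell i hi)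
      fun x hx => hδ i hi x (by simpa using hx)
    rw [intervalIntegral.integral_const, smul_eq_mul] at this
    convert this using 2
    push_cast
    ring
  calc -(h * ∑ i ∈ Finset.range m, δ i)
      = ∑ i ∈ Finset.range m, h * (f (a + i * h) - δ i) - leftRiemannSum f a h m := by
        simp only [leftRiemannSum, mul_sub, Finset.sum_sub_distrib, Finset.mul_sum]
        ring
    _ ≤ leftRiemannError f a h m := by
        rw [leftRiemannError, hsplit]
        gcongr with i hi
        exact hcell_ge i (Finset.mem_range.1 hi)

lemma leftRiemannError_nonneg_of_monotoneOn (hh : 0 ≤ h)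
    (hf : MonotoneOn f (Icc a (a + m * h))) : 0 ≤ leftRiemannError f a h m := by
  have hab : a ≤ a + m * h := le_add_of_nonneg_right (by positivity)
  have := neg_mul_sum_le_leftRiemannError (f := f) hh
    (MonotoneOn.intervalIntegrable (by rwa [uIcc_of_le hab])) 0 fun i hi x hx => by
      simpa using hf (add_nat_mul_mem_Icc hh hi) (Icc_add_nat_mul_subset_Icc hh hi hx) hx.1
  simpa using this

lemma mul_sub_le_leftRiemannError_of_antitoneOn (hh : 0 ≤ h)
    (hf : AntitoneOn f (Icc a (a + m * h))) :
    h * (f (a + m * h) - f a) ≤ leftRiemannError f a h m := by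
  have hab : a ≤ a + m * h := le_add_of_nonneg_right (by positivity)
  have := neg_mul_sum_le_leftRiemannError (f := f) hh
    (AntitoneOn.intervalIntegrable (by rwa [uIcc_of_le hab]))
    (fun i => f (a + i * h) - f (a + (i + 1 : ℕ) * h)) fun i hi x hx => by
      have := hf (Icc_add_nat_mul_subset_Icc hh hi hx)
        (Icc_add_nat_mul_subset_Icc hh hi ⟨by nlinarith, le_rfl⟩) hx.2
      push_cast
      linarith
  rw [Finset.sum_range_sub' (fun i : ℕ => f (a + i * h))] at this
  simpa only [Nat.cast_zero, zero_mul, add_zero, ← mul_neg, neg_sub] using this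

lemma neg_le_leftRiemannError_of_lipschitzOnWith {K : NNReal} (hh : 0 ≤ h)
    (hf : LipschitzOnWith K f (Icc a (a + m * h))) :
    -(m * K * h ^ 2) ≤ leftRiemannError f a h m := by
  have hab : a ≤ a + m * h := le_add_of_nonneg_right (by positivity)
  have := neg_mul_sum_le_leftRiemannError hh
    (hf.continuousOn.intervalIntegrable_of_Icc hab) (fun _ => K * h) fun i hi x hx => by
      have hdist := hf.dist_le_mul x (Icc_add_nat_mul_subset_Icc hh hi hx) _
        (add_nat_mul_mem_Icc hh hi)
      rw [Real.dist_eq, Real.dist_eq, abs_of_nonneg (sub_nonneg.2 hx.1)] at hdist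
      have hxh : x - (a + i * h) ≤ h := by linarith [hx.2]
      linarith [neg_abs_le (f x - f (a + i * h)), mul_le_mul_of_nonneg_left hxh K.coe_nonneg]
  simpa [Finset.sum_const, mul_assoc, pow_two, mul_left_comm] using this

end LeftRiemannError

lemma neg_mul_le_leftRiemannError_const_mul_sqrt_one_sub (c : ℝ) {a h : ℝ} {m : ℕ}
    (hh : 0 ≤ h) :
    -(h * (|c| * √(1 - a))) ≤ leftRiemannError (fun x => c * √(1 - x)) a h m := by
  have hanti : Antitone fun x : ℝ => √(1 - x) := fun x y hxy => Real.sqrt_le_sqrt (by linarith)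
  rcases le_total 0 c with hc | hc
  · have := mul_sub_le_leftRiemannError_of_antitoneOn hh (m := m) (a := a)
      (fun x _ y _ hxy => mul_le_mul_of_nonneg_left (hanti hxy) hc)
    rw [abs_of_nonneg hc]
    nlinarith [mul_nonneg hh (mul_nonneg hc (Real.sqrt_nonneg (1 - (a + m * h))))]
  · have := leftRiemannError_nonneg_of_monotoneOn hh (m := m) (a := a)
      (fun x _ y _ hxy => mul_le_mul_of_nonpos_left (hanti hxy) hc)
    have : 0 ≤ h * (|c| * √(1 - a)) := by positivity
    linarith

lemma inv_sqrt_add_one_le {x : ℝ} (hx : 0 ≤ x) : (√(x + 1))⁻¹ ≤ 2 * (√(x + 1) - √x) := by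
  have hx1 : 0 < √(x + 1) := Real.sqrt_pos.2 (by linarith)
  have hsq : √(x + 1) ^ 2 = x + 1 := Real.sq_sqrt (by linarith)
  have hsq' : √x ^ 2 = x := Real.sq_sqrt hx
  rw [inv_le_iff_one_le_mul₀' hx1]
  nlinarith [sq_nonneg (√(x + 1) - √x), Real.sqrt_nonneg x]

-- `11/10 < 2√2 - 1 - 1/√2` is the deficit at `M = 2`; later terms never exceed the increments
-- of `2√M`.
lemma sum_range_inv_sqrt_succ_le {M : ℕ} (hM : 2 ≤ M) :
    ∑ j ∈ Finset.range M, (√(j + 1))⁻¹ ≤ 2 * √M - 11 / 10 := by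
  induction M, hM using Nat.le_induction with
  | base =>
    have h2 : (1.41 : ℝ) ≤ √2 := Real.le_sqrt_of_sq_le (by norm_num)
    have h2inv : (√2)⁻¹ ≤ 0.71 := by
      rw [inv_le_iff_one_le_mul₀' (by linarith)]
      nlinarith
    norm_num [Finset.sum_range_succ] at h2inv ⊢
    linarith
  | succ M _ ih =>
    rw [Finset.sum_range_succ]
    have := inv_sqrt_add_one_le (Nat.cast_nonneg (α := ℝ) M)
    push_cast
    linarith

lemma intervalIntegrable_one_sub_rpow_neg_half (a b : ℝ) :
    IntervalIntegrable (fun x : ℝ => (1 - x) ^ (-(1 : ℝ) / 2)) volume a b := by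
  simpa using (intervalIntegrable_rpow' (a := 1 - a) (b := 1 - b)
    (show (-1 : ℝ) < -1 / 2 by norm_num)).comp_sub_left 1

lemma integral_one_sub_rpow_neg_half :
    ∫ x in (-1 : ℝ)..1, (1 - x) ^ (-(1 : ℝ) / 2) = 2 * √2 := by
  rw [intervalIntegral.integral_comp_sub_left (fun u : ℝ => u ^ (-(1 : ℝ) / 2)) 1,
    integral_rpow (Or.inl (by norm_num)), Real.sqrt_eq_rpow]
  norm_num
  ring

lemma leftRiemannSum_one_sub_rpow_neg_half {n : ℕ} (hn : 0 < n) :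
    leftRiemannSum (fun x => (1 - x) ^ (-(1 : ℝ) / 2)) (-1) (1 / n) (2 * n)
      = (√n)⁻¹ * ∑ j ∈ Finset.range (2 * n), (√(j + 1))⁻¹ := by
  have hn : (0 : ℝ) < n := by exact_mod_cast hn
  rw [leftRiemannSum, Finset.mul_sum]
  conv_rhs => rw [← Finset.sum_range_reflect]
  refine Finset.sum_congr rfl fun i hi => ?_
  have hi : i < 2 * n := Finset.mem_range.1 hi
  have hbase : 1 - (-1 + i * (1 / n)) = ((2 * n - 1 - i : ℕ) + 1 : ℝ) / n := by
    rw [Nat.cast_sub (by omega), Nat.cast_sub (by omega)]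
    field_simp
    push_cast
    ring
  rw [hbase, show -(1 : ℝ) / 2 = -(1 / 2) by norm_num, Real.rpow_neg (by positivity),
    ← Real.sqrt_eq_rpow, Real.sqrt_div (by positivity)]
  have hsn : √(n : ℝ) ^ 2 = n := Real.sq_sqrt hn.le
  have : 0 < √(n : ℝ) := Real.sqrt_pos.2 hn
  field_simp
  rw [hsn]

lemma neg_one_add_two_mul_one_div {n : ℕ} (hn : 0 < n) :
    (-1 : ℝ) + (2 * n : ℕ) * (1 / n) = 1 := by
  have : (n : ℝ) ≠ 0 := by positivity
  field_simp
  push_cast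
  ring

lemma div_sqrt_le_leftRiemannError_one_sub_rpow_neg_half {n : ℕ} (hn : 0 < n) :
    11 / 10 / √n
      ≤ leftRiemannError (fun x => (1 - x) ^ (-(1 : ℝ) / 2)) (-1) (1 / n) (2 * n) := by
  have hsn : 0 < √(n : ℝ) := Real.sqrt_pos.2 (by exact_mod_cast hn)
  have hsum := sum_range_inv_sqrt_succ_le (M := 2 * n) (by omega)
  rw [Nat.cast_mul, Nat.cast_two, Real.sqrt_mul zero_le_two] at hsum
  rw [leftRiemannError, neg_one_add_two_mul_one_div hn, integral_one_sub_rpow_neg_half,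
    leftRiemannSum_one_sub_rpow_neg_half hn]
  calc 11 / 10 / √n = 2 * √2 - (√n)⁻¹ * (2 * (√2 * √n) - 11 / 10) := by
        field_simp
        ring
    _ ≤ _ := by gcongr

lemma leftRiemannError_eq_integral_sub_sum_Icc {n : ℕ} (hn : 0 < n) (f : ℝ → ℝ) :
    leftRiemannError f (-1) (1 / n) (2 * n) = (∫ x in (-1 : ℝ)..1, f x) -
      ∑ k ∈ Finset.Icc (-(n : ℤ)) ((n : ℤ) - 1), (1 / (n : ℝ)) * f ((k : ℝ) / (n : ℝ)) := by
  have : (n : ℝ) ≠ 0 := by positivity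
  rw [leftRiemannError, neg_one_add_two_mul_one_div hn, leftRiemannSum]
  congr 1
  refine Finset.sum_nbij' (fun i => (i : ℤ) - n) (fun k => (k + n).toNat) ?_ ?_ ?_ ?_ ?_
  · intro i hi
    rw [Finset.mem_range] at hi
    rw [Finset.mem_Icc]
    omega
  · intro k hk
    rw [Finset.mem_Icc] at hk
    rw [Finset.mem_range]
    omega
  · intro i _
    omega
  · intro k hk
    rw [Finset.mem_Icc] at hk
    omega
  · intro i _
    congr 2
    push_cast
    field_simp
    ring

lemma leftRiemannError_eq_of_eqOn {F Ft : ℝ → ℝ} {c₁ c₂ : ℝ} {n : ℕ} (hn : 0 < n)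
    (hFt : ContinuousOn Ft (Icc (-1) 1))
    (hF : EqOn F (fun x => c₁ * (1 - x) ^ (-(1 : ℝ) / 2) + c₂ * √(1 - x) + Ft x)
      (Ico (-1) 1)) :
    leftRiemannError F (-1) (1 / n) (2 * n)
      = c₁ * leftRiemannError (fun x => (1 - x) ^ (-(1 : ℝ) / 2)) (-1) (1 / n) (2 * n)
        + leftRiemannError (fun x => c₂ * √(1 - x)) (-1) (1 / n) (2 * n)
        + leftRiemannError Ft (-1) (1 / n) (2 * n) := by
  have hend := neg_one_add_two_mul_one_div hn
  have hs : Continuous fun x : ℝ => c₂ * √(1 - x) := by fun_prop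
  have hf₁ := (intervalIntegrable_one_sub_rpow_neg_half (-1)
    (-1 + (2 * n : ℕ) * (1 / n))).const_mul c₁
  have hF' : EqOn F (fun x => c₁ * (1 - x) ^ (-(1 : ℝ) / 2) + c₂ * √(1 - x) + Ft x)
      (Ico (-1) (-1 + (2 * n : ℕ) * (1 / n))) := by rwa [hend]
  have hFt' : IntervalIntegrable Ft volume (-1) (-1 + (2 * n : ℕ) * (1 / n)) := by
    rw [hend]
    exact hFt.intervalIntegrable_of_Icc (by norm_num)
  rw [leftRiemannError_congr_of_eqOn (by positivity) hF',
    leftRiemannError_add (hf₁.add (hs.intervalIntegrable _ _)) hFt',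
    leftRiemannError_add hf₁ (hs.intervalIntegrable _ _), leftRiemannError_const_mul]

/-- Proposition 2, lower bound, for z₀ = -1: if F₂(x) = c₁(1-x)^{-1/2} + c₂(1-x)^{1/2} + Ft(x)
on [-1,1) with c₁ > 0 and Ft ∈ C¹[-1,1], then there are L₂* > c₁ and l₂ such that
∫_{-1}^1 F₂ − Σ_{k=-n}^{n-1} (1/n) F₂(k/n) ≥ L₂*/√n − l₂/n for all n ≥ N. -/
theorem riemann_error_inv_sqrt_lower_neg_one
    (N : ℕ) (hN : 0 < N) (F₂ Ft : ℝ → ℝ) (c₁ c₂ : ℝ) (hc₁ : 0 < c₁)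
    (hFt : ContDiffOn ℝ 1 Ft (Set.Icc (-1 : ℝ) 1))
    (hrep : ∀ x ∈ Set.Ico (-1 : ℝ) 1,
      F₂ x = c₁ * (1 - x) ^ (-(1 : ℝ)/2) + c₂ * (1 - x) ^ ((1 : ℝ)/2) + Ft x) :
    ∃ L₂' > c₁, ∃ l₂ : ℝ, ∀ n : ℕ, N ≤ n →
      L₂' / Real.sqrt n - l₂ / (n : ℝ) ≤
        (∫ x in (-1 : ℝ)..1, F₂ x) -
          ∑ k ∈ Finset.Icc (-(n : ℤ)) ((n : ℤ) - 1), (1/(n : ℝ)) * F₂ ((k : ℝ)/(n : ℝ)) := by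
  obtain ⟨K, hK⟩ := hFt.exists_lipschitzOnWith one_ne_zero (convex_Icc _ _) isCompact_Icc
  refine ⟨11 / 10 * c₁, by linarith, √2 * |c₂| + 2 * K, fun n hn => ?_⟩
  have hn0 : 0 < n := hN.trans_le hn
  have hh : (0 : ℝ) ≤ 1 / n := by positivity
  have h₁ := div_sqrt_le_leftRiemannError_one_sub_rpow_neg_half hn0
  have h₂ := neg_mul_le_leftRiemannError_const_mul_sqrt_one_sub c₂ (a := -1) (m := 2 * n) hh
  have h₃ := neg_le_leftRiemannError_of_lipschitzOnWith hh
    (by rwa [neg_one_add_two_mul_one_div hn0])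
  rw [← leftRiemannError_eq_integral_sub_sum_Icc hn0, leftRiemannError_eq_of_eqOn (c₁ := c₁)
    (c₂ := c₂) hn0 hFt.continuousOn fun x hx => by simp only [hrep x hx, Real.sqrt_eq_rpow]]
  calc 11 / 10 * c₁ / √n - (√2 * |c₂| + 2 * K) / n
      = c₁ * (11 / 10 / √n) + -(1 / n * (|c₂| * √(1 - -1)))
        + -((2 * n : ℕ) * K * (1 / n) ^ 2) := by
        norm_num
        field_simp
        ring
    _ ≤ _ := by gcongr
end

section
/- Let F₂ : [-1, 1) → ℝ be a function that can be represented as F₂(x) = c₁(1-x)^{-1/2} + c₂(1-x)^{1/2} + F̃₂(x), where c₁ > 0, c₂ ∈ ℝ, and F̃₂ is continuously differentiable on [-1, 1]. Let δ ∈ (0, 1), c̄₁ > 0 and C > 0 be such that F₂′(x) ≤ (1/2)·c̄₁(1−x)^{-3/2} and F₂′(x) ≥ 0 for all x ∈ [1−δ, 1), and ∫_{-1}^{β} |F₂′(x)| dx ≤ F₂(β) + C for all β ∈ [1−δ, 1), and suppose moreover F₂(x) ≤ c̄₁(1−x)^{-1/2} for x ∈ [1−δ, 1). Then for every integer n ≥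 2/δ: |Σ_{k = -n}^{n-1} ∫_{k/n}^{(k+1)/n} ((k+1)/n − x) F₂′(x) dx| ≤ 2·c̄₁/√n + C/n. -/
/-!
Split `[-1, 1]` at `β = 1 - 1/n`. On each cell `[k/n, (k+1)/n]` left of `β` the weight
`(k+1)/n - x` lies in `[0, 1/n]`, so those cells contribute at most `(1/n) ∫_{-1}^β |F₂'|`,
which the variation bound and `F₂(β) ≤ c̄₁ √n` make `≤ c̄₁/√n + C/n`. On the last cell
`0 ≤ (1 - x) F₂'(x) ≤ (c̄₁/2) (1 - x)^{-1/2}`, whose integral over `[β, 1]` is `c̄₁/√n`.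
Integrability of `F₂'` on `[-1, β]` comes from its continuity on `[-1, 1)`, which the
representation of `F₂` as a `C¹` function there provides.
-/

open MeasureTheory Set

theorem ContDiffOn.continuousOn_of_hasDerivWithinAt {𝕜 E : Type*} [NontriviallyNormedField 𝕜]
    [NormedAddCommGroup E] [NormedSpace 𝕜 E] {F F' : 𝕜 → E} {s : Set 𝕜}
    (hF : ContDiffOn 𝕜 1 F s) (hs : UniqueDiffOn 𝕜 s)
    (hF' : ∀ x ∈ s, HasDerivWithinAt F (F' x) s x) : ContinuousOn F' s :=
  (hF.continuousOn_derivWithin hs le_rfl).congr fun x hx => ((hF' x hx).derivWithin (hs x hx)).symm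

theorem contDiffOn_one_sub_rpow (p : ℝ) {n : WithTop ℕ∞} :
    ContDiffOn ℝ n (fun x : ℝ => (1 - x) ^ p) (Iio 1) :=
  (contDiffOn_const.sub contDiffOn_id).rpow_const_of_ne fun _ hx => (sub_pos.2 hx).ne'

theorem integral_sub_rpow {a b q : ℝ} (hq : -1 < q) :
    ∫ x in a..b, (b - x) ^ q = (b - a) ^ (q + 1) / (q + 1) := by
  rw [intervalIntegral.integral_comp_sub_left (fun x => x ^ q), sub_self,
    integral_rpow (Or.inl hq), Real.zero_rpow (by linarith), sub_zero]

theorem intervalIntegrable_sub_rpow {a b q : ℝ} (hq : -1 < q) :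
    IntervalIntegrable (fun x => (b - x) ^ q) volume a b := by
  simpa using
    (intervalIntegral.intervalIntegrable_rpow' hq (a := b - a) (b := b - b)).comp_sub_left b

theorem abs_integral_sub_mul_le_of_le_rpow {f : ℝ → ℝ} {a b K p : ℝ} (hab : a ≤ b) (hp : -2 < p)
    (hf₀ : ∀ x ∈ Ioo a b, 0 ≤ f x) (hfK : ∀ x ∈ Ioo a b, f x ≤ K * (b - x) ^ p) :
    |∫ x in a..b, (b - x) * f x| ≤ K * (b - a) ^ (p + 2) / (p + 2) := by
  have hnonneg : 0 ≤ᵐ[volume.restrict (Ioo a b)] fun x => (b - x) * f x :=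
    ae_restrict_of_forall_mem measurableSet_Ioo fun x hx =>
      mul_nonneg (by linarith [hx.2]) (hf₀ x hx)
  have hle : (fun x => (b - x) * f x) ≤ᵐ[volume.restrict (Ioo a b)]
      fun x => K * (b - x) ^ (p + 1) :=
    ae_restrict_of_forall_mem measurableSet_Ioo fun x hx => by
      have hx' : 0 < b - x := by linarith [hx.2]
      calc (b - x) * f x ≤ (b - x) * (K * (b - x) ^ p) := by gcongr; exact hfK x hx
        _ = K * (b - x) ^ (p + 1) := by rw [Real.rpow_add_one hx'.ne']; ring
  have hint : Integrable (fun x => K * (b - x) ^ (p + 1)) (volume.restrict (Ioo a b)) :=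
    ((intervalIntegrable_sub_rpow (by linarith)).const_mul K).1.mono_set Ioo_subset_Ioc_self
  rw [intervalIntegral.integral_of_le hab, integral_Ioc_eq_integral_Ioo,
    abs_of_nonneg (integral_nonneg_of_ae hnonneg)]
  calc ∫ x in Ioo a b, (b - x) * f x ≤ ∫ x in Ioo a b, K * (b - x) ^ (p + 1) :=
        integral_mono_of_nonneg hnonneg hint hle
    _ = K * (b - a) ^ (p + 2) / (p + 2) := by
        rw [← integral_Ioc_eq_integral_Ioo, ← intervalIntegral.integral_of_le hab,
          intervalIntegral.integral_const_mul, integral_sub_rpow (by linarith)]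
        ring_nf

theorem abs_integral_sub_mul_le {f : ℝ → ℝ} {a b : ℝ} (hab : a ≤ b)
    (hf : IntervalIntegrable f volume a b) :
    |∫ x in a..b, (b - x) * f x| ≤ (b - a) * ∫ x in a..b, |f x| := by
  rw [← intervalIntegral.integral_const_mul]
  refine (intervalIntegral.abs_integral_le_integral_abs hab).trans <|
    intervalIntegral.integral_mono_on hab
      (hf.continuousOn_mul (continuousOn_const.sub continuousOn_id)).abs
      (hf.abs.const_mul _) fun x hx => ?_
  rw [abs_mul, abs_of_nonneg (by linarith [hx.2])]
  gcongr
  linarith [hx.1]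

theorem abs_sum_integral_sub_mul_le {f : ℝ → ℝ} {t : ℕ → ℝ} {h : ℝ} {N : ℕ} (ht : Monotone t)
    (hth : ∀ i, t (i + 1) - t i ≤ h) (hf : IntervalIntegrable f volume (t 0) (t N)) :
    |∑ i ∈ Finset.range N, ∫ x in t i..t (i + 1), (t (i + 1) - x) * f x|
      ≤ h * ∫ x in t 0..t N, |f x| := by
  have hsub : ∀ i < N, IntervalIntegrable f volume (t i) (t (i + 1)) := fun i hi =>
    hf.mono_set <| uIcc_subset_uIcc
      (by simp [uIcc_of_le (ht (Nat.zero_le N)), ht (Nat.zero_le i), ht hi.le])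
      (by simp [uIcc_of_le (ht (Nat.zero_le N)), ht (Nat.zero_le (i + 1)), ht hi])
  rw [← intervalIntegral.sum_integral_adjacent_intervals fun i hi => (hsub i hi).abs,
    Finset.mul_sum]
  refine (Finset.abs_sum_le_sum_abs _ _).trans (Finset.sum_le_sum fun i hi => ?_)
  calc _ ≤ (t (i + 1) - t i) * ∫ x in t i..t (i + 1), |f x| :=
        abs_integral_sub_mul_le (ht i.le_succ) (hsub i (Finset.mem_range.1 hi))
    _ ≤ h * ∫ x in t i..t (i + 1), |f x| := by
        gcongr
        · exact intervalIntegral.integral_nonneg (ht i.le_succ) fun x _ => abs_nonneg _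
        · exact hth i

theorem Finset.sum_Icc_neg_eq_sum_range {M : Type*} [AddCommMonoid M] (n : ℕ) (g : ℤ → M) :
    ∑ k ∈ Finset.Icc (-(n : ℤ)) (n - 1), g k = ∑ i ∈ Finset.range (2 * n), g (i - n) := by
  refine Finset.sum_nbij' (fun k => (k + n).toNat) (fun i => i - n) ?_ ?_ ?_ ?_ ?_ <;>
    intro x hx <;>
    simp only [Finset.mem_Icc, Finset.mem_range, Int.ofNat_toNat, Int.toNat_natCast,
      sub_add_cancel] at hx ⊢ <;>
    first | omega | (congr 1; omega)

theorem abs_sum_integral_uniform_partition_le {f : ℝ → ℝ} {n : ℕ} (hn : 0 < n)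
    (hf : IntervalIntegrable f volume (-1) (1 - 1 / n)) :
    |∑ k ∈ Finset.Icc (-(n : ℤ)) ((n : ℤ) - 1),
        ∫ x in (k : ℝ) / n..((k : ℝ) + 1) / n, (((k : ℝ) + 1) / n - x) * f x|
      ≤ 1 / n * (∫ x in (-1)..(1 - 1 / n), |f x|) + |∫ x in (1 - 1 / n)..1, (1 - x) * f x| := by
  have hn₀ : (0 : ℝ) < n := Nat.cast_pos.2 hn
  set t : ℕ → ℝ := fun i => ((i : ℝ) - n) / n with ht
  obtain ⟨N, hN⟩ : ∃ N, 2 * n = N + 1 := ⟨2 * n - 1, by omega⟩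
  have ht₀ : t 0 = -1 := by simp [ht, hn₀.ne']
  have htN : t N = 1 - 1 / n := by
    have : (N : ℝ) = 2 * n - 1 := by rw [eq_sub_iff_add_eq]; exact_mod_cast hN.symm
    simp only [ht, this]; field_simp; ring
  have htN₁ : t (N + 1) = 1 := by
    have : ((N + 1 : ℕ) : ℝ) = 2 * n := by exact_mod_cast hN.symm
    simp only [ht, this]; field_simp; ring
  have hterm : ∀ i : ℕ,
      (∫ x in (((i : ℤ) - n : ℤ) : ℝ) / n..((((i : ℤ) - n : ℤ) : ℝ) + 1) / n,
        (((((i : ℤ) - n : ℤ) : ℝ) + 1) / n - x) * f x) =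
      ∫ x in t i..t (i + 1), (t (i + 1) - x) * f x := fun i => by
    simp only [ht]; push_cast; ring_nf
  rw [Finset.sum_Icc_neg_eq_sum_range, hN, Finset.sum_range_succ]
  simp only [hterm]
  rw [htN, htN₁]
  refine (abs_add_le _ _).trans (add_le_add ?_ le_rfl)
  rw [← ht₀, ← htN]
  refine abs_sum_integral_sub_mul_le (fun i j hij => by simp only [ht]; gcongr)
    (fun i => le_of_eq ?_) (by rwa [ht₀, htN])
  rw [ht, ← sub_div]; push_cast; ring

theorem sigma_one_estimate_general
    (F₂ F₂' Ft : ℝ → ℝ) (c₁ c₂ cmax C δ : ℝ)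
    (hFt : ContDiffOn ℝ 1 Ft (Set.Icc (-1 : ℝ) 1))
    (hrep : ∀ x ∈ Set.Ico (-1 : ℝ) 1,
      F₂ x = c₁ * (1 - x) ^ (-(1 : ℝ)/2) + c₂ * (1 - x) ^ ((1 : ℝ)/2) + Ft x)
    (hderiv : ∀ x ∈ Set.Ico (-1 : ℝ) 1, HasDerivWithinAt F₂ (F₂' x) (Set.Ico (-1 : ℝ) 1) x)
    (hδ : δ ∈ Set.Ioo (0 : ℝ) 1)
    (hderiv_nonneg : ∀ x ∈ Set.Ico (1 - δ) (1 : ℝ), 0 ≤ F₂' x)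
    (hderiv_up : ∀ x ∈ Set.Ico (1 - δ) (1 : ℝ), F₂' x ≤ (1/2) * cmax * (1 - x) ^ (-(3 : ℝ)/2))
    (hF₂_up : ∀ x ∈ Set.Ico (1 - δ) (1 : ℝ), F₂ x ≤ cmax * (1 - x) ^ (-(1 : ℝ)/2))
    (hBV : ∀ β ∈ Set.Ico (1 - δ) (1 : ℝ), (∫ x in (-1 : ℝ)..β, |F₂' x|) ≤ F₂ β + C)
    (n : ℕ) (hn : 2/δ ≤ (n : ℝ)) :
    |∑ k ∈ Finset.Icc (-(n : ℤ)) ((n : ℤ) - 1),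
        ∫ x in ((k : ℝ)/(n : ℝ))..(((k : ℝ) + 1)/(n : ℝ)),
          (((k : ℝ) + 1)/(n : ℝ) - x) * F₂' x|
      ≤ 2 * cmax / Real.sqrt n + C / (n : ℝ) := by
  have hn₀ : (0 : ℝ) < n := (div_pos two_pos hδ.1).trans_le hn
  have hβ : 1 - 1 / (n : ℝ) ∈ Ico (1 - δ) 1 := by
    have : 1 / (n : ℝ) < δ := by
      rw [div_le_iff₀ hδ.1] at hn
      rw [div_lt_iff₀ hn₀]
      nlinarith [hδ.2]
    constructor <;> linarith [one_div_pos.2 hn₀]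
  have hcont : ContinuousOn F₂' (Ico (-1) 1) := by
    refine ContDiffOn.continuousOn_of_hasDerivWithinAt (ContDiffOn.congr ?_ hrep)
      (uniqueDiffOn_Ico _ _) hderiv
    exact ((((contDiffOn_one_sub_rpow _).const_smul c₁).add
      ((contDiffOn_one_sub_rpow _).const_smul c₂)).mono fun x hx => hx.2).add
      (hFt.mono Ico_subset_Icc_self)
  have hint : IntervalIntegrable F₂' volume (-1) (1 - 1 / n) :=
    (hcont.mono (by
      rw [uIcc_of_le (by linarith [hβ.1, hδ.2])]
      exact Icc_subset_Ico_right hβ.2)).intervalIntegrable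
  have htail := abs_integral_sub_mul_le_of_le_rpow (p := -(3 : ℝ) / 2) hβ.2.le (by norm_num)
    (fun x hx => hderiv_nonneg x ⟨hβ.1.trans hx.1.le, hx.2⟩)
    (fun x hx => hderiv_up x ⟨hβ.1.trans hx.1.le, hx.2⟩)
  have h₁ : (1 - (1 - 1 / n : ℝ)) ^ (-(1 : ℝ) / 2) = √n := by
    rw [sub_sub_cancel, one_div, Real.inv_rpow hn₀.le, ← Real.rpow_neg hn₀.le,
      Real.sqrt_eq_rpow]
    norm_num
  have h₂ : (1 - (1 - 1 / n : ℝ)) ^ (-(3 : ℝ) / 2 + 2) = (√n)⁻¹ := by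
    rw [sub_sub_cancel, show -(3 : ℝ) / 2 + 2 = 1 / 2 by norm_num, one_div,
      Real.inv_rpow hn₀.le, Real.sqrt_eq_rpow]
  calc _ ≤ _ := abs_sum_integral_uniform_partition_le (Nat.cast_pos.1 hn₀) hint
    _ ≤ 1 / n * (cmax * √n + C) + 1 / 2 * cmax * (√n)⁻¹ / (-(3 : ℝ) / 2 + 2) := by
      rw [← h₂, ← h₁]
      gcongr
      exact (hBV _ hβ).trans (by gcongr; exact hF₂_up _ hβ)
    _ = 2 * cmax / √n + C / n := by
      set s := √(n : ℝ)
      have hs : (n : ℝ) = s ^ 2 := (Real.sq_sqrt hn₀.le).symm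
      have hs₀ : 0 < s := Real.sqrt_pos.2 hn₀
      rw [hs]
      field_simp
      ring

/-- Estimate of Σ_{1,n} in the proof of Proposition 2: if
F₂(x) = c₁(1-x)^{-1/2} + c₂(1-x)^{1/2} + Ft(x) on [-1,1) with c₁ > 0 and Ft ∈ C¹[-1,1],
and δ ∈ (0,1), cmax > 0, C > 0 are such that on [1−δ, 1) one has
0 ≤ F₂′(x) ≤ (1/2)cmax(1−x)^{-3/2} and F₂(x) ≤ cmax(1−x)^{-1/2}, and
∫_{-1}^β |F₂′| ≤ F₂(β) + C for all β ∈ [1−δ, 1), then for every n ≥ 2/δ,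
|Σ_{k=-n}^{n-1} ∫_{k/n}^{(k+1)/n} ((k+1)/n − x) F₂′(x) dx| ≤ 2cmax/√n + C/n. -/
theorem sigma_one_estimate
    (F₂ F₂' Ft : ℝ → ℝ) (c₁ c₂ cmax C δ : ℝ) (hc₁ : 0 < c₁)
    (hFt : ContDiffOn ℝ 1 Ft (Set.Icc (-1 : ℝ) 1))
    (hrep : ∀ x ∈ Set.Ico (-1 : ℝ) 1,
      F₂ x = c₁ * (1 - x) ^ (-(1 : ℝ)/2) + c₂ * (1 - x) ^ ((1 : ℝ)/2) + Ft x)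
    (hderiv : ∀ x ∈ Set.Ico (-1 : ℝ) 1, HasDerivWithinAt F₂ (F₂' x) (Set.Ico (-1 : ℝ) 1) x)
    (hδ : δ ∈ Set.Ioo (0 : ℝ) 1) (hcmax : 0 < cmax) (hC : 0 < C)
    (hderiv_nonneg : ∀ x ∈ Set.Ico (1 - δ) (1 : ℝ), 0 ≤ F₂' x)
    (hderiv_up : ∀ x ∈ Set.Ico (1 - δ) (1 : ℝ), F₂' x ≤ (1/2) * cmax * (1 - x) ^ (-(3 : ℝ)/2))
    (hF₂_up : ∀ x ∈ Set.Ico (1 - δ) (1 : ℝ), F₂ x ≤ cmax * (1 - x) ^ (-(1 : ℝ)/2))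
    (hBV : ∀ β ∈ Set.Ico (1 - δ) (1 : ℝ), (∫ x in (-1 : ℝ)..β, |F₂' x|) ≤ F₂ β + C)
    (n : ℕ) (hn : 2/δ ≤ (n : ℝ)) :
    |∑ k ∈ Finset.Icc (-(n : ℤ)) ((n : ℤ) - 1),
        ∫ x in ((k : ℝ)/(n : ℝ))..(((k : ℝ) + 1)/(n : ℝ)),
          (((k : ℝ) + 1)/(n : ℝ) - x) * F₂' x|
      ≤ 2 * cmax / Real.sqrt n + C / (n : ℝ) :=
  sigma_one_estimate_general F₂ F₂' Ft c₁ c₂ cmax C δ hFt hrep hderiv hδ hderiv_nonneg hderiv_up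
    hF₂_up hBV n hn
end
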